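/- (Mutual exclusivity of normal forms.) Let P be a finite set of propositional variables and d ≥ 0. If ψ1, ψ2 ∈ F_P^d and ψ1 ≠ ψ2, then no pointed Kripke model satisfies both ψ1 and ψ2; equivalently, ¬(ψ1 ∧ ψ2) is valid for K. -/

import Mathlib

/-- Modal formulas in negation normal form, as in the paper:
φ ::= ⊥ | ⊤ | p | ¬p | φ∧φ | φ∨φ | □φ | ◇φ. -/
inductive Form : Type where
  | bot : Form
  | top : Form
  | pos : ℕ → Form
  | npos : ℕ → Form
  | and : Form → Form → Form
  | or : Form → Form → Form
  | box : Form → Form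
  | dia : Form → Form
deriving DecidableEq

namespace Form

/-- Negation, defined as usual (by De Morgan dualities). -/
def neg : Form → Form
  | bot => top
  | top => bot
  | pos p => npos p
  | npos p => pos p
  | and φ ψ => or φ.neg ψ.neg
  | or φ ψ => and φ.neg ψ.neg
  | box φ => dia φ.neg
  | dia φ => box φ.neg

/-- Implication φ → ψ, defined as usual. -/
def imp (φ ψ : Form) : Form := or φ.neg ψ

/-- Bi-implication φ ↔ ψ, defined as usual. -/
def biimp (φ ψ : Form) : Form := and (imp φ ψ) (imp ψ φ)

/-- P(φ): the set of propositional variables occurring in φ. -/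
def vars : Form → Finset ℕ
  | bot => ∅
  | top => ∅
  | pos p => {p}
  | npos p => {p}
  | and φ ψ => φ.vars ∪ ψ.vars
  | or φ ψ => φ.vars ∪ ψ.vars
  | box φ => φ.vars
  | dia φ => φ.vars

/-- Modal depth. -/
def md : Form → ℕ
  | bot => 0
  | top => 0
  | pos _ => 0
  | npos _ => 0
  | and φ ψ => max φ.md ψ.md
  | or φ ψ => max φ.md ψ.md
  | box φ => φ.md + 1
  | dia φ => φ.md + 1

/-- sub(φ): the set of subformulas of φ. -/
def subf : Form → Finset Form
  | bot => {bot}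
  | top => {top}
  | pos p => {pos p}
  | npos p => {npos p}
  | and φ ψ => insert (and φ ψ) (φ.subf ∪ ψ.subf)
  | or φ ψ => insert (or φ ψ) (φ.subf ∪ ψ.subf)
  | box φ => insert (box φ) φ.subf
  | dia φ => insert (dia φ) φ.subf

/-- s̄ub(φ) = sub(φ) ∪ {¬ψ : ψ ∈ sub(φ)}. -/
def subBar (φ : Form) : Finset Form := φ.subf ∪ φ.subf.image neg

/-- □^k φ : k nested boxes. -/
def boxIter : ℕ → Form → Form
  | 0, φ => φ
  | n + 1, φ => box (boxIter n φ)

def isDia : Form → Bool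
  | dia _ => true
  | _ => false

def isBox : Form → Bool
  | box _ => true
  | _ => false

end Form

/-- Big conjunction over a finite set of formulas (⋀∅ = ⊤). -/
noncomputable def bigAnd (s : Finset Form) : Form := s.toList.foldr Form.and Form.top

/-- Big disjunction over a finite set of formulas (⋁∅ = ⊥). -/
noncomputable def bigOr (s : Finset Form) : Form := s.toList.foldr Form.or Form.bot

/-- th(a) = ⋀ a. -/
noncomputable def th (a : Finset Form) : Form := bigAnd a

/-- A finite Kripke model: a nonempty finite set of states, an accessibility
relation and a valuation. -/
structure Model : Type 1 where
  W : Type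
  nonempty : Nonempty W
  finite : Finite W
  R : W → W → Prop
  V : W → Set ℕ

/-- Satisfaction M,w ⊨ φ. -/
def Model.sat (M : Model) : M.W → Form → Prop
  | _, .bot => False
  | _, .top => True
  | w, .pos p => p ∈ M.V w
  | w, .npos p => p ∉ M.V w
  | w, .and φ ψ => M.sat w φ ∧ M.sat w ψ
  | w, .or φ ψ => M.sat w φ ∨ M.sat w ψ
  | w, .box φ => ∀ v, M.R w v → M.sat v φ
  | w, .dia φ => ∃ v, M.R w v ∧ M.sat v φ

/-- The six base logics K, D, T, K4, KD4, S4. -/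
inductive BaseLogic : Type where
  | K | D | T | K4 | KD4 | S4
deriving DecidableEq

/-- A logic: a base logic, possibly extended by axiom 5. -/
structure Logic : Type where
  base : BaseLogic
  has5 : Bool
deriving DecidableEq

def Logic.K : Logic := ⟨.K, false⟩
def Logic.D : Logic := ⟨.D, false⟩
def Logic.T : Logic := ⟨.T, false⟩
def Logic.K4 : Logic := ⟨.K4, false⟩
def Logic.KD4 : Logic := ⟨.KD4, false⟩
def Logic.S4 : Logic := ⟨.S4, false⟩

/-- l + 5. -/
def BaseLogic.plus5 (b : BaseLogic) : Logic := ⟨b, true⟩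

/-- M is a model for the logic l (frame conditions). -/
def Model.IsFor (M : Model) (l : Logic) : Prop :=
  (match l.base with
    | .K => True
    | .D => ∀ w, ∃ v, M.R w v
    | .T => ∀ w, M.R w w
    | .K4 => ∀ a b c, M.R a b → M.R b c → M.R a c
    | .KD4 => (∀ w, ∃ v, M.R w v) ∧ (∀ a b c, M.R a b → M.R b c → M.R a c)
    | .S4 => (∀ w, M.R w w) ∧ (∀ a b c, M.R a b → M.R b c → M.R a c))
  ∧ (l.has5 = true → ∀ a b c, M.R a b → M.R a c → M.R b c)

/-- φ is satisfiable for l: satisfied at some state of some finite model for l. -/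
def Satisfiable (l : Logic) (φ : Form) : Prop :=
  ∃ M : Model, M.IsFor l ∧ ∃ w : M.W, M.sat w φ

/-- φ is valid for l: satisfied at every state of every finite model for l. -/
def Valid (l : Logic) (φ : Form) : Prop :=
  ∀ M : Model, M.IsFor l → ∀ w : M.W, M.sat w φ

/-- φ is complete for l: for every ψ ∈ L(P(φ)), φ→ψ or φ→¬ψ is valid for l. -/
def Complete (l : Logic) (φ : Form) : Prop :=
  ∀ ψ : Form, ψ.vars ⊆ φ.vars → (Valid l (φ.imp ψ) ∨ Valid l (φ.imp ψ.neg))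

/-- Z is a bisimulation modulo P from M to M'. -/
def IsBisim (P : Set ℕ) (M M' : Model) (Z : M.W → M'.W → Prop) : Prop :=
  (∃ s s', Z s s') ∧
  ∀ s s', Z s s' →
    (M.V s ∩ P = M'.V s' ∩ P) ∧
    (∀ t, M.R s t → ∃ t', M'.R s' t' ∧ Z t t') ∧
    (∀ t', M'.R s' t' → ∃ t, M.R s t ∧ Z t t')

/-- (M,a) ∼_P (M',a'). -/
def Bisimilar (P : Set ℕ) (M : Model) (a : M.W) (M' : Model) (a' : M'.W) : Prop :=
  ∃ Z, IsBisim P M M' Z ∧ Z a a'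

/-- (M,a) ≡_P (M',a'): the two pointed models satisfy the same formulas of L(P). -/
def EquivP (P : Set ℕ) (M : Model) (a : M.W) (M' : Model) (a' : M'.W) : Prop :=
  ∀ φ : Form, ↑φ.vars ⊆ P → (M.sat a φ ↔ M'.sat a' φ)

/-- (M,s) is flat (for base logic l, with axiom 5): the carrier is {s}∪W and
R = R1 ∪ R2 with R1 ⊆ {s}×W, R2 an equivalence relation on W, and s ∈ W if
l ∈ {T,S4}. -/
def Flat (l : BaseLogic) (M : Model) (s : M.W) : Prop :=
  ∃ W : Set M.W, (∀ w, w = s ∨ w ∈ W) ∧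
    ∃ R1 R2 : M.W → M.W → Prop,
      (∀ x y, M.R x y ↔ (R1 x y ∨ R2 x y)) ∧
      (∀ x y, R1 x y → x = s ∧ y ∈ W) ∧
      (∀ x y, R2 x y → x ∈ W ∧ y ∈ W) ∧
      (∀ x ∈ W, R2 x x) ∧
      (∀ x y, R2 x y → R2 y x) ∧
      (∀ x y z, R2 x y → R2 y z → R2 x z) ∧
      ((l = .T ∨ l = .S4) → s ∈ W)

/-- A maximal state for l with respect to φ: a maximally l-consistent subset
of s̄ub(φ). -/
def MaxState (l : Logic) (φ : Form) (a : Finset Form) : Prop :=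
  a ⊆ φ.subBar ∧ Satisfiable l (th a) ∧ ∀ ψ ∈ φ.subf, ψ ∈ a ∨ ψ.neg ∈ a

/-- D(x) = {◇ψ : ◇ψ ∈ x}. -/
def DSet (x : Finset Form) : Finset Form := x.filter (fun ψ => ψ.isDia = true)

/-- B(x) = {□ψ : □ψ ∈ x}. -/
def BSet (x : Finset Form) : Finset Form := x.filter (fun ψ => ψ.isBox = true)

/-- A view: a parent-state and a finite set of children-states. -/
structure View : Type where
  parent : Finset Form
  children : Finset (Finset Form)

/-- The view is with respect to φ: all its states are subsets of s̄ub(φ). -/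
def View.WF (φ : Form) (S : View) : Prop :=
  S.parent ⊆ φ.subBar ∧ ∀ c ∈ S.children, c ⊆ φ.subBar

/-- A set of formulas is l-closed. -/
def LClosed (l : Logic) (P : Finset ℕ) (s : Finset Form) : Prop :=
  (∀ φ1 φ2 : Form, Form.and φ1 φ2 ∈ s → φ1 ∈ s ∧ φ2 ∈ s) ∧
  (∀ φ1 φ2 : Form, Form.or φ1 φ2 ∈ s → φ1 ∈ s ∨ φ2 ∈ s) ∧
  ((l.base = .T ∨ l.base = .S4) → ∀ ψ : Form, Form.box ψ ∈ s → ψ ∈ s) ∧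
  (∀ p ∈ P, Form.pos p ∈ s ∨ Form.npos p ∈ s)

/-- The view S is l-complete. -/
def ViewLComplete (l : Logic) (P : Finset ℕ) (S : View) : Prop :=
  LClosed l P S.parent ∧
  (∀ c ∈ S.children, LClosed l P c) ∧
  (∀ ψ : Form, Form.dia ψ ∈ S.parent → ∃ c ∈ S.children, ψ ∈ c) ∧
  (∀ ψ : Form, Form.box ψ ∈ S.parent → ∀ c ∈ S.children, ψ ∈ c) ∧
  ((l.base = .K4 ∨ l.base = .KD4 ∨ l.base = .S4) →
    ∀ ψ : Form, Form.box ψ ∈ S.parent → ∀ c ∈ S.children, Form.box ψ ∈ c) ∧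
  (l.base = .KD4 → S.children.Nonempty)

/-- The view S is consistent for l: every one of its states is consistent. -/
def ViewConsistent (l : Logic) (S : View) : Prop :=
  Satisfiable l (th S.parent) ∧ ∀ c ∈ S.children, Satisfiable l (th c)

/-- d = max{md(th(c')) : c' ∈ C(S)}. -/
noncomputable def childDepth (S : View) : ℕ := S.children.sup (fun c => (th c).md)

/-- A K-maximal child-state: a maximally K-consistent subset of s̄ub_d(φ). -/
def KMaxChild (φ : Form) (d : ℕ) (c : Finset Form) : Prop :=
  c ⊆ φ.subBar.filter (fun ψ => ψ.md ≤ d) ∧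
  Satisfiable Logic.K (th c) ∧
  ∀ ψ ∈ φ.subf, ψ.md ≤ d → (ψ ∈ c ∨ ψ.neg ∈ c)

/-- S' completes S (for logic l, with respect to φ). -/
def ViewCompletes (l : Logic) (φ : Form) (S' S : View) : Prop :=
  ViewLComplete l φ.vars S' ∧
  S.parent ⊆ S'.parent ∧
  (∀ a ∈ S.children, ∃ a' ∈ S'.children, a ⊆ a') ∧
  (l.base = .K → ∀ a' ∈ S'.children, KMaxChild φ (childDepth S') a') ∧
  (l.base ≠ .K → ∀ a' ∈ S'.children, MaxState l φ a')

/-- The depth-0 normal form ⋀_{p∈S} p ∧ ⋀_{p∈P∖S} ¬p. -/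
noncomputable def nf0 (P S : Finset ℕ) : Form :=
  Form.and (bigAnd (S.image Form.pos)) (bigAnd ((P \ S).image Form.npos))

/-- Fine's normal forms F_P^d. -/
noncomputable def NF (P : Finset ℕ) : ℕ → Set Form
  | 0 => { χ | ∃ S ⊆ P, χ = nf0 P S }
  | d + 1 => { χ | ∃ S : Finset Form, ↑S ⊆ NF P d ∧ ∃ S0 ⊆ P,
      χ = Form.and (nf0 P S0)
            (Form.and (bigAnd (S.image Form.dia)) (Form.box (bigOr S))) }

/-- φ is complete up to its depth for l. -/
def CompleteUpToDepth (l : Logic) (φ : Form) : Prop :=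
  ∀ ψ : Form, ψ.vars ⊆ φ.vars → ψ.md ≤ φ.md →
    (Valid l (φ.imp ψ) ∨ Valid l (φ.imp ψ.neg))

namespace Model

variable (M : Model) (w : M.W)

theorem sat_bigAnd (s : Finset Form) : M.sat w (bigAnd s) ↔ ∀ φ ∈ s, M.sat w φ := by
  simp_rw [bigAnd, ← Finset.mem_toList]
  induction s.toList with
  | nil => simp [sat]
  | cons a t ih => simp [sat, ih]

theorem sat_bigOr (s : Finset Form) : M.sat w (bigOr s) ↔ ∃ φ ∈ s, M.sat w φ := by
  simp_rw [bigOr, ← Finset.mem_toList]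
  induction s.toList with
  | nil => simp [sat]
  | cons a t ih => simp [sat, ih]

theorem sat_neg (φ : Form) : M.sat w φ.neg ↔ ¬ M.sat w φ := by
  induction φ generalizing w with
  | and φ ψ ihφ ihψ => simp only [sat, Form.neg, ihφ, ihψ, not_and_or]
  | or φ ψ ihφ ihψ => simp only [sat, Form.neg, ihφ, ihψ, not_or]
  | box φ ih => simp [sat, Form.neg, ih]
  | dia φ ih => simp [sat, Form.neg, ih]
  | _ => simp [sat, Form.neg]

variable {M w}

theorem mem_iff_of_sat_nf0 {P S : Finset ℕ} (hS : S ⊆ P) (h : M.sat w (nf0 P S)) (p : ℕ) :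
    p ∈ S ↔ p ∈ P ∧ p ∈ M.V w := by
  obtain ⟨hpos, hneg⟩ := h
  rw [sat_bigAnd] at hpos hneg
  refine ⟨fun hp => ⟨hS hp, hpos _ (Finset.mem_image_of_mem _ hp)⟩, fun ⟨hpP, hpV⟩ => ?_⟩
  by_contra hpS
  exact hneg (.npos p) (Finset.mem_image_of_mem _ (Finset.mem_sdiff.2 ⟨hpP, hpS⟩)) hpV

theorem eq_of_sat_nf0 {P S₁ S₂ : Finset ℕ} (hS₁ : S₁ ⊆ P) (hS₂ : S₂ ⊆ P)
    (h₁ : M.sat w (nf0 P S₁)) (h₂ : M.sat w (nf0 P S₂)) : S₁ = S₂ := by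
  ext p
  rw [mem_iff_of_sat_nf0 hS₁ h₁, mem_iff_of_sat_nf0 hS₂ h₂]

end Model

def Exclusive (φ ψ : Form) : Prop :=
  ∀ (M : Model) (w : M.W), ¬ (M.sat w φ ∧ M.sat w ψ)

theorem Exclusive.valid_neg_and {φ ψ : Form} (h : Exclusive φ ψ) (l : Logic) :
    Valid l (Form.and φ ψ).neg :=
  fun M _ w => (M.sat_neg w _).2 (h M w)

/-- Each `◇φ` with `φ ∈ A` is witnessed by a successor satisfying some member of `B`, and
mutual exclusivity forces that member to be `φ` itself. -/
theorem subset_of_sat_dia_box {X : Set Form} (hX : X.Pairwise Exclusive)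
    {A B : Finset Form} (hA : ↑A ⊆ X) (hB : ↑B ⊆ X) {M : Model} {w : M.W}
    (hdia : M.sat w (bigAnd (A.image .dia))) (hbox : M.sat w (.box (bigOr B))) : A ⊆ B := by
  intro φ hφ
  obtain ⟨v, hwv, hφv⟩ := (M.sat_bigAnd w _).1 hdia _ (Finset.mem_image_of_mem _ hφ)
  obtain ⟨φ', hφ', hφ'v⟩ := (M.sat_bigOr v B).1 (hbox v hwv)
  by_contra hφB
  have hne : φ ≠ φ' := fun h => hφB (h ▸ hφ')
  exact hX (hA hφ) (hB hφ') hne M v ⟨hφv, hφ'v⟩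

theorem pairwise_exclusive_NF (P : Finset ℕ) (d : ℕ) : (NF P d).Pairwise Exclusive := by
  induction d with
  | zero =>
    rintro _ ⟨S₁, hS₁, rfl⟩ _ ⟨S₂, hS₂, rfl⟩ hne M w ⟨h₁, h₂⟩
    exact hne (congrArg _ (Model.eq_of_sat_nf0 hS₁ hS₂ h₁ h₂))
  | succ d ih =>
    rintro _ ⟨S₁, hS₁, T₁, hT₁, rfl⟩ _ ⟨S₂, hS₂, T₂, hT₂, rfl⟩ hne M w
      ⟨⟨h₁, hdia₁, hbox₁⟩, ⟨h₂, hdia₂, hbox₂⟩⟩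
    have hT : T₁ = T₂ := Model.eq_of_sat_nf0 hT₁ hT₂ h₁ h₂
    have hS : S₁ = S₂ := (subset_of_sat_dia_box ih hS₁ hS₂ hdia₁ hbox₂).antisymm
      (subset_of_sat_dia_box ih hS₂ hS₁ hdia₂ hbox₁)
    exact hne (by rw [hT, hS])

/-- distinct normal forms in F_P^d are mutually exclusive. -/
theorem stmt16 (P : Finset ℕ) (d : ℕ) (ψ1 ψ2 : Form)
    (h1 : ψ1 ∈ NF P d) (h2 : ψ2 ∈ NF P d) (hne : ψ1 ≠ ψ2) :
    (∀ (M : Model) (w : M.W), ¬ (M.sat w ψ1 ∧ M.sat w ψ2)) ∧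
    Valid Logic.K (Form.and ψ1 ψ2).neg :=
  have hexcl : Exclusive ψ1 ψ2 := pairwise_exclusive_NF P d h1 h2 hne
  ⟨hexcl, hexcl.valid_neg_and Logic.K⟩
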